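/- arXiv:1310.7697 — 8 statements merged into one kernel-verified Lean document; each statement's English description precedes it below -/
import Mathlib

section
/- Let n ≥ 1, let f : ℝⁿ → ℝ be scaling-invariant with respect to 0 and let d ∈ ℝⁿ with d ≠ 0. If there exist real numbers 0 < a < b such that the map t ↦ f(t·d) is constant on the open interval (a, b), then t ↦ f(t·d) is constant on the whole open ray (0, ∞), i.e. f(s·d) = f(t·d) for all s, t > 0. -/
/-!
Along the ray through `d`, scaling invariance says that every dilation `t ↦ ρ t` maps level sets
of `g t = f (t • d)` into level sets. Hence constancy of `g` on `(a, b)` transfers to every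
`(ρ a, ρ b)`; these intervals contain a neighbourhood of each point of `(0, ∞)`, so `g` is
locally constant there, and thus constant because `(0, ∞)` is connected.
-/

/-- `f` is scaling-invariant with respect to `xstar`. -/
def ScalingInvariant {n : ℕ} (f : EuclideanSpace ℝ (Fin n) → ℝ)
    (xstar : EuclideanSpace ℝ (Fin n)) : Prop :=
  ∀ ρ : ℝ, 0 < ρ → ∀ x y : EuclideanSpace ℝ (Fin n),
    (f (ρ • (x - xstar)) ≤ f (ρ • (y - xstar)) ↔ f (x - xstar) ≤ f (y - xstar))

open Filter Set Topology

theorem ScalingInvariant.apply_smul_eq_iff {n : ℕ} {f : EuclideanSpace ℝ (Fin n) → ℝ}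
    (hf : ScalingInvariant f 0) {ρ : ℝ} (hρ : 0 < ρ) (x y : EuclideanSpace ℝ (Fin n)) :
    f (ρ • x) = f (ρ • y) ↔ f x = f y := by
  have hxy := hf ρ hρ x y
  have hyx := hf ρ hρ y x
  simp only [sub_zero] at hxy hyx
  rw [le_antisymm_iff, le_antisymm_iff, hxy, hyx]

section DilationInvariantLevelSets

variable {α : Type*} {g : ℝ → α} {a b : ℝ}

theorem eq_of_mem_Ioo_mul (hg : ∀ ρ > 0, ∀ s t, g s = g t → g (ρ * s) = g (ρ * t))
    (hconst : ∀ s ∈ Ioo a b, ∀ t ∈ Ioo a b, g s = g t) {ρ : ℝ} (hρ : 0 < ρ) {s t : ℝ}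
    (hs : s ∈ Ioo (ρ * a) (ρ * b)) (ht : t ∈ Ioo (ρ * a) (ρ * b)) : g s = g t := by
  have div_mem : ∀ u ∈ Ioo (ρ * a) (ρ * b), u / ρ ∈ Ioo a b := fun u hu =>
    ⟨(lt_div_iff₀' hρ).2 hu.1, (div_lt_iff₀' hρ).2 hu.2⟩
  simpa only [mul_div_cancel₀ _ hρ.ne'] using
    hg ρ hρ _ _ (hconst _ (div_mem s hs) _ (div_mem t ht))

theorem eventually_eq_of_const_on_Ioo
    (hg : ∀ ρ > 0, ∀ s t, g s = g t → g (ρ * s) = g (ρ * t))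
    (hconst : ∀ s ∈ Ioo a b, ∀ t ∈ Ioo a b, g s = g t) (ha : 0 < a) (hab : a < b)
    {x : ℝ} (hx : 0 < x) : ∀ᶠ y in 𝓝 x, g x = g y := by
  -- the dilation by `ρ` carries the midpoint of `(a, b)` to `x`
  have hsum : 0 < a + b := by linarith
  set ρ := 2 * x / (a + b)
  have hρ : 0 < ρ := by positivity
  have hx_mem : x ∈ Ioo (ρ * a) (ρ * b) := by
    have hx_eq : ρ * ((a + b) / 2) = x := by
      simp only [ρ]
      field_simp [hsum.ne']
    rw [← hx_eq]
    exact ⟨by gcongr; linarith, by gcongr; linarith⟩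
  filter_upwards [Ioo_mem_nhds hx_mem.1 hx_mem.2] with y hy
  exact eq_of_mem_Ioo_mul hg hconst hρ hx_mem hy

theorem eq_of_const_on_Ioo (hg : ∀ ρ > 0, ∀ s t, g s = g t → g (ρ * s) = g (ρ * t))
    (hconst : ∀ s ∈ Ioo a b, ∀ t ∈ Ioo a b, g s = g t) (ha : 0 < a) (hab : a < b)
    {s t : ℝ} (hs : 0 < s) (ht : 0 < t) : g s = g t :=
  isPreconnected_Ioi.induction₂ (fun s t => g s = g t)
    (fun _ hx => nhdsWithin_le_nhds (eventually_eq_of_const_on_Ioo hg hconst ha hab hx))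
    (fun _ _ _ _ _ _ => Eq.trans) (fun _ _ _ _ => Eq.symm) hs ht

end DilationInvariantLevelSets

theorem scalingInvariant_constant_on_ray_of_interval_general {n : ℕ}
    (f : EuclideanSpace ℝ (Fin n) → ℝ) (hf : ScalingInvariant f 0)
    (d : EuclideanSpace ℝ (Fin n))
    (a b : ℝ) (ha : 0 < a) (hab : a < b)
    (hconst : ∀ s ∈ Set.Ioo a b, ∀ t ∈ Set.Ioo a b, f (s • d) = f (t • d)) :
    ∀ s t : ℝ, 0 < s → 0 < t → f (s • d) = f (t • d) := by
  have hg : ∀ ρ > 0, ∀ s t : ℝ, f (s • d) = f (t • d) → f ((ρ * s) • d) = f ((ρ * t) • d) :=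
    fun ρ hρ s t hst => by simpa only [mul_smul] using (hf.apply_smul_eq_iff hρ _ _).2 hst
  exact fun s t hs ht => eq_of_const_on_Ioo (g := fun t => f (t • d)) hg hconst ha hab hs ht

/-- if `t ↦ f (t • d)` is constant on some open interval `(a, b)` with
`0 < a < b`, then it is constant on the whole open ray `(0, ∞)`. -/
theorem scalingInvariant_constant_on_ray_of_interval {n : ℕ} (hn : 1 ≤ n)
    (f : EuclideanSpace ℝ (Fin n) → ℝ) (hf : ScalingInvariant f 0)
    (d : EuclideanSpace ℝ (Fin n)) (hd : d ≠ 0)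
    (a b : ℝ) (ha : 0 < a) (hab : a < b)
    (hconst : ∀ s ∈ Set.Ioo a b, ∀ t ∈ Set.Ioo a b, f (s • d) = f (t • d)) :
    ∀ s t : ℝ, 0 < s → 0 < t → f (s • d) = f (t • d) :=
  scalingInvariant_constant_on_ray_of_interval_general f hf d a b ha hab hconst
end

section
/- Let n ≥ 1, let f : ℝⁿ → ℝ be scaling-invariant with respect to 0, let x₀ ∈ ℝⁿ with x₀ ≠ 0, and let 0 < ε < ‖x₀‖ (Euclidean norm). If f is constant on the open Euclidean ball B(x₀, ε) (a local plateau), then f is constant on the whole open ray {t·x₀ : t > 0}. -/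
open Metric Topology Pointwise

theorem IsPreconnected.apply_eq_of_forall_nhds_subsingleton_image {X Y : Type*}
    [TopologicalSpace X] {f : X → Y} {s : Set X} (hs : IsPreconnected s)
    (hloc : ∀ x ∈ s, ∃ u ∈ 𝓝 x, (f '' u).Subsingleton) {x y : X} (hx : x ∈ s) (hy : y ∈ s) :
    f x = f y := by
  refine eq_of_germ_isConstant_on (fun z hz => ?_) hs hx hy
  obtain ⟨u, hu, hfu⟩ := hloc z hz
  exact ⟨f z, Filter.mem_of_superset hu fun w hw =>
    hfu (Set.mem_image_of_mem f hw) (Set.mem_image_of_mem f (mem_of_mem_nhds hu))⟩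

namespace ScalingInvariant

variable {n : ℕ} {f : EuclideanSpace ℝ (Fin n) → ℝ}

theorem apply_smul_eq_of_apply_eq (hf : ScalingInvariant f 0) {ρ : ℝ} (hρ : 0 < ρ)
    {x y : EuclideanSpace ℝ (Fin n)} (hxy : f x = f y) : f (ρ • x) = f (ρ • y) := by
  have hle := hf ρ hρ x y
  have hge := hf ρ hρ y x
  simp only [sub_zero] at hle hge
  exact le_antisymm (hle.2 hxy.le) (hge.2 hxy.ge)

theorem subsingleton_image_smul (hf : ScalingInvariant f 0) {ρ : ℝ} (hρ : 0 < ρ)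
    {s : Set (EuclideanSpace ℝ (Fin n))} (hs : (f '' s).Subsingleton) :
    (f '' (ρ • s)).Subsingleton := by
  rintro _ ⟨_, ⟨x, hx, rfl⟩, rfl⟩ _ ⟨_, ⟨y, hy, rfl⟩, rfl⟩
  exact hf.apply_smul_eq_of_apply_eq hρ
    (hs (Set.mem_image_of_mem f hx) (Set.mem_image_of_mem f hy))

end ScalingInvariant

theorem scalingInvariant_constant_on_ray_of_plateau_general {n : ℕ}
    (f : EuclideanSpace ℝ (Fin n) → ℝ) (hf : ScalingInvariant f 0)
    (x₀ : EuclideanSpace ℝ (Fin n))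
    (ε : ℝ) (hε : 0 < ε)
    (hconst : ∀ x ∈ Metric.ball x₀ ε, ∀ y ∈ Metric.ball x₀ ε, f x = f y) :
    ∀ s t : ℝ, 0 < s → 0 < t → f (s • x₀) = f (t • x₀) := by
  have hball : (f '' ball x₀ ε).Subsingleton := by
    rintro _ ⟨x, hx, rfl⟩ _ ⟨y, hy, rfl⟩
    exact hconst x hx y hy
  have hray : IsPreconnected ((· • x₀) '' Set.Ioi (0 : ℝ)) :=
    isPreconnected_Ioi.image _ (continuous_id.smul continuous_const).continuousOn
  intro s t hs ht
  refine hray.apply_eq_of_forall_nhds_subsingleton_image ?_ ⟨s, hs, rfl⟩ ⟨t, ht, rfl⟩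
  rintro _ ⟨ρ, hρ : 0 < ρ, rfl⟩
  refine ⟨ρ • ball x₀ ε, ?_, hf.subsingleton_image_smul hρ hball⟩
  rw [_root_.smul_ball hρ.ne', Real.norm_of_nonneg hρ.le]
  exact ball_mem_nhds _ (mul_pos hρ hε)

/-- if a scaling-invariant function (w.r.t. `0`) is constant on an open
ball `B(x₀, ε)` with `0 < ε < ‖x₀‖`, then it is constant on the open ray `{t • x₀ : t > 0}`. -/
theorem scalingInvariant_constant_on_ray_of_plateau {n : ℕ} (hn : 1 ≤ n)
    (f : EuclideanSpace ℝ (Fin n) → ℝ) (hf : ScalingInvariant f 0)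
    (x₀ : EuclideanSpace ℝ (Fin n)) (hx₀ : x₀ ≠ 0)
    (ε : ℝ) (hε : 0 < ε) (hεlt : ε < ‖x₀‖)
    (hconst : ∀ x ∈ Metric.ball x₀ ε, ∀ y ∈ Metric.ball x₀ ε, f x = f y) :
    ∀ s t : ℝ, 0 < s → 0 < t → f (s • x₀) = f (t • x₀) :=
  scalingInvariant_constant_on_ray_of_plateau_general f hf x₀ ε hε hconst
end

section
/- Invariance of a CB-SARS to strictly monotonic transformations of the objective function: let (Sol, G₁, G₂, Ord) define a CB-SARS with transition function F, let f : ℝⁿ → ℝ be any objective function, and let g : ℝ → ℝ be strictly increasing on the range f(ℝⁿ) of f. Fix an initial state (X₀, σ₀) ∈ ℝⁿ × (0, ∞) and an arbitrary sequence (u_t)_{t∈ℕ} of elements of 𝕌^p, and define two sequences by (X_{t+1}, σ_{t+1}) = F^f((X_t, σ_t), u_t) and by (X'₀, σ'₀) = (X₀, σ₀), (X'_{t+1}, σ'_{t+1}) = F^{g∘f}((X'_t, σ'_t), u_t). Then (X_t, σ_t) = (X'_t, σ'_t) for all t ∈ ℕ. -/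
/-- The transition function `F^f` of a CB-SARS `(Sol, G₁, G₂, Ord)` on the objective
function `f`: candidate solutions are sampled with `Sol`, ranked on `f` via the ordering
function `Ord`, and the state is updated with `G₁` and `G₂` applied to the reordered
sampling vector `S * u = (u^{S(1)}, …, u^{S(p)})`. -/
def transition {n p : ℕ} {U : Type*}
    (Sol : (EuclideanSpace ℝ (Fin n) × ℝ) → U → EuclideanSpace ℝ (Fin n))
    (G1 : (EuclideanSpace ℝ (Fin n) × ℝ) → (Fin p → U) → EuclideanSpace ℝ (Fin n))
    (G2 : ℝ → (Fin p → U) → ℝ)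
    (Ord : (Fin p → ℝ) → Equiv.Perm (Fin p))
    (f : EuclideanSpace ℝ (Fin n) → ℝ)
    (state : EuclideanSpace ℝ (Fin n) × ℝ) (u : Fin p → U) :
    EuclideanSpace ℝ (Fin n) × ℝ :=
  (G1 state (fun i => u (Ord (fun j => f (Sol state (u j))) i)),
   G2 state.2 (fun i => u (Ord (fun j => f (Sol state (u j))) i)))

/-- a CB-SARS is invariant under strictly monotonic transformations of the
objective function: running it on `f` or on `g ∘ f` (for `g` strictly increasing on the
range of `f`) with the same sampling sequence and same initial state gives the same
sequence of states. -/
theorem cbsars_invariance_monotone {n p : ℕ} (hn : 1 ≤ n) (hp : 1 ≤ p) {U : Type*}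
    (Sol : (EuclideanSpace ℝ (Fin n) × ℝ) → U → EuclideanSpace ℝ (Fin n))
    (G1 : (EuclideanSpace ℝ (Fin n) × ℝ) → (Fin p → U) → EuclideanSpace ℝ (Fin n))
    (G2 : ℝ → (Fin p → U) → ℝ)
    (Ord : (Fin p → ℝ) → Equiv.Perm (Fin p))
    (hOrdSorted : ∀ v : Fin p → ℝ, Monotone fun i => v (Ord v i))
    (hOrdDet : ∀ v w : Fin p → ℝ, (∀ i j, v i ≤ v j ↔ w i ≤ w j) → Ord v = Ord w)
    (f : EuclideanSpace ℝ (Fin n) → ℝ) (g : ℝ → ℝ)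
    (hg : ∀ a ∈ Set.range f, ∀ b ∈ Set.range f, a < b → g a < g b)
    (X0 : EuclideanSpace ℝ (Fin n)) (σ0 : ℝ) (hσ0 : 0 < σ0)
    (u : ℕ → Fin p → U)
    (seq seq' : ℕ → EuclideanSpace ℝ (Fin n) × ℝ)
    (h0 : seq 0 = (X0, σ0)) (h0' : seq' 0 = (X0, σ0))
    (hrec : ∀ t, seq (t + 1) = transition Sol G1 G2 Ord f (seq t) (u t))
    (hrec' : ∀ t, seq' (t + 1) = transition Sol G1 G2 Ord (g ∘ f) (seq' t) (u t)) :
    ∀ t, seq t = seq' t := by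
  intro t
  induction t with
  | zero => rw [h0, h0']
  | succ t ih =>
    rw [hrec, hrec', ih]
    unfold transition
    have key : Ord (fun j => f (Sol (seq' t) (u t j)))
        = Ord (fun j => (g ∘ f) (Sol (seq' t) (u t j))) := by
      apply hOrdDet
      intro i j
      simp only [Function.comp_apply]
      constructor
      · intro h
        rcases eq_or_lt_of_le h with h | h
        · rw [h]
        · exact le_of_lt (hg _ ⟨_, rfl⟩ _ ⟨_, rfl⟩ h)
      · intro h
        by_contra hc
        push_neg at hc
        exact absurd h (not_le.mpr (hg _ ⟨_, rfl⟩ _ ⟨_, rfl⟩ hc))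
    rw [key]
end

section
/- Translation invariance of a CB-SARS: let (Sol, G₁, G₂, Ord) define a CB-SARS with transition function F. Assume (i) Sol((x + x₀, σ), u) = Sol((x, σ), u) + x₀ for all x, x₀ ∈ ℝⁿ, all σ > 0 and all u ∈ 𝕌, and (ii) G₁((x + x₀, σ), y) = G₁((x, σ), y) + x₀ for all x, x₀ ∈ ℝⁿ, all σ > 0 and all y ∈ 𝕌^p. Then for every objective function f : ℝⁿ → ℝ, every x₀ ∈ ℝⁿ, every (x, σ) ∈ ℝⁿ × (0, ∞) and every u ∈ 𝕌^p, writing f_{x₀} for the function z ↦ f(z − x₀) and (x', σ') := F^{f_{x₀}}((x + x₀, σ), u), it holds that F^f((x, σ), u) = (x' − x₀, σ'). -/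
/-- translation invariance of a CB-SARS whose `Sol` and `G₁` are
translation equivariant: `F^f((x, σ), u) = (x' - x₀, σ')` where
`(x', σ') = F^{f(· - x₀)}((x + x₀, σ), u)`. -/
theorem cbsars_translation_invariance {n p : ℕ} (hn : 1 ≤ n) (hp : 1 ≤ p) {U : Type*}
    (Sol : (EuclideanSpace ℝ (Fin n) × ℝ) → U → EuclideanSpace ℝ (Fin n))
    (G1 : (EuclideanSpace ℝ (Fin n) × ℝ) → (Fin p → U) → EuclideanSpace ℝ (Fin n))
    (G2 : ℝ → (Fin p → U) → ℝ)
    (Ord : (Fin p → ℝ) → Equiv.Perm (Fin p))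
    (hSol : ∀ (x x₀ : EuclideanSpace ℝ (Fin n)) (σ : ℝ), 0 < σ → ∀ u : U,
      Sol (x + x₀, σ) u = Sol (x, σ) u + x₀)
    (hG1 : ∀ (x x₀ : EuclideanSpace ℝ (Fin n)) (σ : ℝ), 0 < σ → ∀ y : Fin p → U,
      G1 (x + x₀, σ) y = G1 (x, σ) y + x₀)
    (f : EuclideanSpace ℝ (Fin n) → ℝ)
    (x₀ x : EuclideanSpace ℝ (Fin n)) (σ : ℝ) (hσ : 0 < σ) (u : Fin p → U) :
    transition Sol G1 G2 Ord f (x, σ) u =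
      ((transition Sol G1 G2 Ord (fun z => f (z - x₀)) (x + x₀, σ) u).1 - x₀,
       (transition Sol G1 G2 Ord (fun z => f (z - x₀)) (x + x₀, σ) u).2) := by
  have key : (fun j => (fun z => f (z - x₀)) (Sol (x + x₀, σ) (u j)))
      = fun j => f (Sol (x, σ) (u j)) := by
    funext j
    simp [hSol x x₀ σ hσ (u j)]
  simp only [transition, key, hG1 x x₀ σ hσ]
  simp
end

section
/- Scale invariance of a CB-SARS: let (Sol, G₁, G₂, Ord) define a CB-SARS with transition function F. Assume that for all α > 0: (i) Sol((x, σ), u) = α · Sol((x/α, σ/α), u) for all (x, σ) ∈ ℝⁿ × (0, ∞) and all u ∈ 𝕌; (ii) G₁((x, σ), y) = α · G₁((x/α, σ/α), y) for all (x, σ) ∈ ℝⁿ × (0, ∞) and all y ∈ 𝕌^p; and (iii) G₂(σ, y) = α · G₂(σ/α, y) for all σ > 0 and all y ∈ 𝕌^p. Then for every objective function f : ℝⁿ → ℝ, every α > 0, every (x, σ) ∈ ℝⁿ × (0, ∞) and every u ∈ 𝕌^p, writing f_α for the function z ↦ f(α·z) and (x', σ') := F^{f_α}((x/α, σ/α),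 u), it holds that F^f((x, σ), u) = (α·x', α·σ'). -/
/-- scale invariance of a CB-SARS whose `Sol`, `G₁`, `G₂` are scale
equivariant: `F^f((x, σ), u) = (α • x', α * σ')` where
`(x', σ') = F^{f(α • ·)}((x/α, σ/α), u)`. -/
theorem cbsars_scale_invariance {n p : ℕ} (hn : 1 ≤ n) (hp : 1 ≤ p) {U : Type*}
    (Sol : (EuclideanSpace ℝ (Fin n) × ℝ) → U → EuclideanSpace ℝ (Fin n))
    (G1 : (EuclideanSpace ℝ (Fin n) × ℝ) → (Fin p → U) → EuclideanSpace ℝ (Fin n))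
    (G2 : ℝ → (Fin p → U) → ℝ)
    (Ord : (Fin p → ℝ) → Equiv.Perm (Fin p))
    (hSol : ∀ α : ℝ, 0 < α → ∀ (x : EuclideanSpace ℝ (Fin n)) (σ : ℝ), 0 < σ → ∀ u : U,
      Sol (x, σ) u = α • Sol (α⁻¹ • x, σ / α) u)
    (hG1 : ∀ α : ℝ, 0 < α → ∀ (x : EuclideanSpace ℝ (Fin n)) (σ : ℝ), 0 < σ →
      ∀ y : Fin p → U, G1 (x, σ) y = α • G1 (α⁻¹ • x, σ / α) y)
    (hG2 : ∀ α : ℝ, 0 < α → ∀ σ : ℝ, 0 < σ → ∀ y : Fin p → U,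
      G2 σ y = α * G2 (σ / α) y)
    (f : EuclideanSpace ℝ (Fin n) → ℝ)
    (α : ℝ) (hα : 0 < α)
    (x : EuclideanSpace ℝ (Fin n)) (σ : ℝ) (hσ : 0 < σ) (u : Fin p → U) :
    transition Sol G1 G2 Ord f (x, σ) u =
      (α • (transition Sol G1 G2 Ord (fun z => f (α • z)) (α⁻¹ • x, σ / α) u).1,
       α * (transition Sol G1 G2 Ord (fun z => f (α • z)) (α⁻¹ • x, σ / α) u).2) := by
  have hf : (fun j => f (Sol (x, σ) (u j))) =
      (fun j => (fun z => f (α • z)) (Sol (α⁻¹ • x, σ / α) (u j))) := by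
    funext j; rw [hSol α hα x σ hσ]
  unfold transition
  simp only [hf]
  exact Prod.ext (hG1 α hα x σ hσ _) (hG2 α hα σ hσ _)
end

section
/- Equality of ranking permutations on scaling-invariant functions: let Sol : Ω × 𝕌 → ℝⁿ be a solution function satisfying Sol((x, σ), u) = α · Sol((x/α, σ/α), u) for all α > 0, all (x, σ) ∈ ℝⁿ × (0, ∞) and all u ∈ 𝕌, and let Ord be an ordering function on ℝ^p. Let f : ℝⁿ → ℝ be scaling-invariant with respect to 0. Then for every (x, σ) ∈ ℝⁿ × (0, ∞) and every u ∈ 𝕌^p, the ranking permutation starting from (x, σ) equals the ranking permutation starting from (x/σ, 1): Ord((f(Sol((x, σ), uⁱ)))_{i=1,…,p}) = Ord((f(Sol((x/σ, 1), uⁱ)))_{i=1,…,p}). -/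
/-- on a function scaling-invariant with respect to `0`, the ranking
permutation of the candidate solutions starting from `(x, σ)` equals the ranking
permutation starting from the normalized state `(x/σ, 1)`. -/
theorem ranking_permutation_normalized {n p : ℕ} (hn : 1 ≤ n) (hp : 1 ≤ p) {U : Type*}
    (Sol : (EuclideanSpace ℝ (Fin n) × ℝ) → U → EuclideanSpace ℝ (Fin n))
    (hSol : ∀ α : ℝ, 0 < α → ∀ (x : EuclideanSpace ℝ (Fin n)) (σ : ℝ), 0 < σ → ∀ u : U,
      Sol (x, σ) u = α • Sol (α⁻¹ • x, σ / α) u)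
    (Ord : (Fin p → ℝ) → Equiv.Perm (Fin p))
    (hOrdSorted : ∀ v : Fin p → ℝ, Monotone fun i => v (Ord v i))
    (hOrdDet : ∀ v w : Fin p → ℝ, (∀ i j, v i ≤ v j ↔ w i ≤ w j) → Ord v = Ord w)
    (f : EuclideanSpace ℝ (Fin n) → ℝ) (hf : ScalingInvariant f 0)
    (x : EuclideanSpace ℝ (Fin n)) (σ : ℝ) (hσ : 0 < σ) (u : Fin p → U) :
    Ord (fun i => f (Sol (x, σ) (u i))) = Ord (fun i => f (Sol (σ⁻¹ • x, 1) (u i))) := by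
  apply hOrdDet
  intro i j
  have key : ∀ k : Fin p, Sol (x, σ) (u k) = σ • Sol (σ⁻¹ • x, 1) (u k) := by
    intro k
    have := hSol σ hσ x σ hσ (u k)
    rwa [div_self (ne_of_gt hσ)] at this
  have hf' := hf σ hσ (Sol (σ⁻¹ • x, 1) (u i)) (Sol (σ⁻¹ • x, 1) (u j))
  simp only [sub_zero] at hf'
  rw [key i, key j]
  exact hf'
end

section
/- The normalized process of a scale-invariant CB-SARS on a scaling-invariant function is an autonomous recursion: let (Sol, G₁, G₂, Ord) define a CB-SARS with transition function F satisfying, for all α > 0, (i) Sol((x, σ), u) = α·Sol((x/α, σ/α), u), (ii) G₁((x, σ), y) = α·G₁((x/α, σ/α), y), (iii) G₂(σ, y) = α·G₂(σ/α, y) (for all (x, σ) ∈ ℝⁿ × (0, ∞), u ∈ 𝕌, y ∈ 𝕌^p). Let f : ℝⁿ → ℝ be scaling-invariant with respect to 0. Fix (X₀, σ₀) ∈ ℝⁿ × (0, ∞) and an arbitrary sequence (u_t)_{t∈ℕ} in 𝕌^p, define (X_{t+1}, σ_{t+1}) = F^f((X_t, σ_t), u_t), and set Z_t := X_t / σ_t.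 Then for every t ∈ ℕ: Z_{t+1} = G₁((Z_t, 1), S_t * u_t) / G₂(1, S_t * u_t), where S_t := Ord((f(Sol((Z_t, 1), u_tⁱ)))_{i=1,…,p}). In particular (Z_t) is determined by Z₀ and (u_t) alone, independently of (X₀, σ₀) beyond Z₀ = X₀/σ₀. -/
/-- for a scale-invariant CB-SARS on a function scaling-invariant with
respect to `0`, the normalized process `Z_t = X_t / σ_t` satisfies the autonomous
recursion `Z_{t+1} = G₁((Z_t, 1), S_t * u_t) / G₂(1, S_t * u_t)`, where `S_t` is the
ranking permutation of the candidate solutions sampled from `(Z_t, 1)`. -/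
theorem normalized_chain_autonomous {n p : ℕ} (hn : 1 ≤ n) (hp : 1 ≤ p) {U : Type*}
    (Sol : (EuclideanSpace ℝ (Fin n) × ℝ) → U → EuclideanSpace ℝ (Fin n))
    (G1 : (EuclideanSpace ℝ (Fin n) × ℝ) → (Fin p → U) → EuclideanSpace ℝ (Fin n))
    (G2 : ℝ → (Fin p → U) → ℝ)
    (Ord : (Fin p → ℝ) → Equiv.Perm (Fin p))
    (hOrdSorted : ∀ v : Fin p → ℝ, Monotone fun i => v (Ord v i))
    (hOrdDet : ∀ v w : Fin p → ℝ, (∀ i j, v i ≤ v j ↔ w i ≤ w j) → Ord v = Ord w)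
    (hSol : ∀ α : ℝ, 0 < α → ∀ (x : EuclideanSpace ℝ (Fin n)) (σ : ℝ), 0 < σ → ∀ u : U,
      Sol (x, σ) u = α • Sol (α⁻¹ • x, σ / α) u)
    (hG1 : ∀ α : ℝ, 0 < α → ∀ (x : EuclideanSpace ℝ (Fin n)) (σ : ℝ), 0 < σ →
      ∀ y : Fin p → U, G1 (x, σ) y = α • G1 (α⁻¹ • x, σ / α) y)
    (hG2 : ∀ α : ℝ, 0 < α → ∀ σ : ℝ, 0 < σ → ∀ y : Fin p → U,
      G2 σ y = α * G2 (σ / α) y)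
    (hG2pos : ∀ (σ : ℝ), 0 < σ → ∀ y : Fin p → U, 0 < G2 σ y)
    (f : EuclideanSpace ℝ (Fin n) → ℝ) (hf : ScalingInvariant f 0)
    (X : ℕ → EuclideanSpace ℝ (Fin n)) (σ : ℕ → ℝ) (hσ0 : 0 < σ 0)
    (u : ℕ → Fin p → U)
    (hrec : ∀ t, (X (t + 1), σ (t + 1)) = transition Sol G1 G2 Ord f (X t, σ t) (u t))
    (Z : ℕ → EuclideanSpace ℝ (Fin n)) (hZ : ∀ t, Z t = (σ t)⁻¹ • X t) :
    ∀ t, Z (t + 1) =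
      (G2 1 (fun i => u t (Ord (fun j => f (Sol (Z t, 1) (u t j))) i)))⁻¹ •
        G1 (Z t, 1) (fun i => u t (Ord (fun j => f (Sol (Z t, 1) (u t j))) i)) := by
  
  have hσpos : ∀ t, 0 < σ t := by
    intro t
    induction t with
    | zero => exact hσ0
    | succ t ih =>
      have h := congrArg Prod.snd (hrec t)
      simp only [transition] at h
      rw [h]
      exact hG2pos (σ t) ih _
  intro t
  set α := σ t with hα
  have hαpos : 0 < α := hσpos t
  have hsol : ∀ j, Sol (X t, σ t) (u t j) = α • Sol (Z t, 1) (u t j) := by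
    intro j
    rw [hSol α hαpos (X t) (σ t) hαpos (u t j), hZ t, div_self (ne_of_gt hαpos)]
  have hOrdEq : Ord (fun j => f (Sol (X t, σ t) (u t j)))
      = Ord (fun j => f (Sol (Z t, 1) (u t j))) := by
    apply hOrdDet
    intro i j
    rw [hsol i, hsol j]
    have := hf α hαpos (Sol (Z t, 1) (u t i)) (Sol (Z t, 1) (u t j))
    simpa using this
  set y : Fin p → U := fun i => u t (Ord (fun j => f (Sol (Z t, 1) (u t j))) i) with hy
  have hX1 : X (t + 1) = α • G1 (Z t, 1) y := by
    have h := congrArg Prod.fst (hrec t)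
    simp only [transition] at h
    rw [h, hOrdEq, ← hy, hG1 α hαpos (X t) (σ t) hαpos y, hZ t,
      div_self (ne_of_gt hαpos)]
  have hσ1 : σ (t + 1) = α * G2 1 y := by
    have h := congrArg Prod.snd (hrec t)
    simp only [transition] at h
    rw [h, hOrdEq, ← hy, hG2 α hαpos (σ t) hαpos y, div_self (ne_of_gt hαpos)]
  have hg2pos : 0 < G2 1 y := hG2pos 1 one_pos y
  rw [hZ (t + 1), hX1, hσ1, smul_smul, mul_inv_rev,
    mul_assoc, inv_mul_cancel₀ (ne_of_gt hαpos), mul_one]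
end

section
/- Invariance of the multiplicative step-size change under normalization: let (Sol, G₁, G₂, Ord) define a CB-SARS satisfying, for all α > 0, (i) Sol((x, σ), u) = α·Sol((x/α, σ/α), u) for all (x, σ) ∈ ℝⁿ × (0, ∞), u ∈ 𝕌, and (iii) G₂(σ, y) = α·G₂(σ/α, y) for all σ > 0, y ∈ 𝕌^p. Define the multiplicative step-size update η*(y) := G₂(1, y). Let f : ℝⁿ → ℝ be scaling-invariant with respect to 0. Then for every (x, σ) ∈ ℝⁿ × (0, ∞) and every u ∈ 𝕌^p, the new step-size produced from state (x, σ) equals σ times the step-size change computed from the normalized state: G₂(σ, S_{(x,σ)} * u) = σ · η*(S_{(x/σ,1)} * u), where S_{(x,σ)} := Ord((f(Sol((x, σ), uⁱ)))_{i=1,…,p}) and S_{(x/σ,1)} := Ord((f(Sol((x/σ, 1), uⁱ)))_{i=1,…,p}). -/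
/-- for a scale-invariant CB-SARS on a function scaling-invariant with
respect to `0`, the new step-size produced from the state `(x, σ)` equals `σ` times the
multiplicative step-size change `η*(y) = G₂(1, y)` computed from the normalized state
`(x/σ, 1)`. -/
theorem step_size_change_normalized {n p : ℕ} (hn : 1 ≤ n) (hp : 1 ≤ p) {U : Type*}
    (Sol : (EuclideanSpace ℝ (Fin n) × ℝ) → U → EuclideanSpace ℝ (Fin n))
    (G2 : ℝ → (Fin p → U) → ℝ)
    (Ord : (Fin p → ℝ) → Equiv.Perm (Fin p))
    (hOrdSorted : ∀ v : Fin p → ℝ, Monotone fun i => v (Ord v i))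
    (hOrdDet : ∀ v w : Fin p → ℝ, (∀ i j, v i ≤ v j ↔ w i ≤ w j) → Ord v = Ord w)
    (hSol : ∀ α : ℝ, 0 < α → ∀ (x : EuclideanSpace ℝ (Fin n)) (σ : ℝ), 0 < σ → ∀ u : U,
      Sol (x, σ) u = α • Sol (α⁻¹ • x, σ / α) u)
    (hG2 : ∀ α : ℝ, 0 < α → ∀ σ : ℝ, 0 < σ → ∀ y : Fin p → U,
      G2 σ y = α * G2 (σ / α) y)
    (f : EuclideanSpace ℝ (Fin n) → ℝ) (hf : ScalingInvariant f 0)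
    (x : EuclideanSpace ℝ (Fin n)) (σ : ℝ) (hσ : 0 < σ) (u : Fin p → U) :
    G2 σ (fun i => u (Ord (fun j => f (Sol (x, σ) (u j))) i)) =
      σ * G2 1 (fun i => u (Ord (fun j => f (Sol (σ⁻¹ • x, 1) (u j))) i)) := by
  have hord : Ord (fun j => f (Sol (x, σ) (u j))) =
      Ord (fun j => f (Sol (σ⁻¹ • x, 1) (u j))) := by
    apply hOrdDet
    intro i j
    have hs : ∀ k, Sol (x, σ) (u k) = σ • Sol (σ⁻¹ • x, 1) (u k) := by
      intro k
      have := hSol σ hσ x σ hσ (u k)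
      rwa [div_self hσ.ne'] at this
    rw [hs i, hs j]
    have := hf σ hσ (Sol (σ⁻¹ • x, 1) (u i)) (Sol (σ⁻¹ • x, 1) (u j))
    simpa using this
  rw [hord]
  have := hG2 σ hσ σ hσ (fun i => u (Ord (fun j => f (Sol (σ⁻¹ • x, 1) (u j))) i))
  rwa [div_self hσ.ne'] at this
end
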